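/- arXiv:1406.6439 — 2 statements merged into one kernel-verified Lean document; each statement's English description precedes it below -/
import Mathlib

section
/- Let F be a free group and let a be a generator (a member of the free basis, i.e. the image of a basis element under FreeGroup.of). Then the centralizer of a in F equals the cyclic subgroup generated by a: an element x commutes with a if and only if x = a^k for some integer k. -/
/-!
Induct on the reduced length of an element `x` commuting with `a = of i`. If the reduced word of `x`
ends (or, equivalently since `x * a = a * x`, begins) with `a⁻¹`, then `x * a` is a shorter
element commuting with `a`. Otherwise no cancellation occurs on either side, so the reduced words
of `x * a` and `a * x` are `w ++ [a]` and `a :: w` for `w` the word of `x`; their equality forces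
`w` to be a power of the letter `a`.
-/

theorem List.eq_replicate_of_append_singleton_eq_cons {β : Type*} {c : β} :
    ∀ {l : List β}, l ++ [c] = c :: l → l = List.replicate l.length c
  | [], _ => rfl
  | b :: l, h => by
    obtain ⟨rfl, h⟩ := List.cons_eq_cons.mp h
    rw [List.length_cons, List.replicate_succ,
      ← List.eq_replicate_of_append_singleton_eq_cons h]

namespace FreeGroup

variable {α : Type*} {x : FreeGroup α} {i : α}

theorem inv_of_eq_mk (i : α) : (of i)⁻¹ = mk [(i, false)] := rfl

section DecidableEq

variable [DecidableEq α]

theorem toWord_mul_of (h : x.toWord.getLast? ≠ some (i, false)) :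
    (x * of i).toWord = x.toWord ++ [(i, true)] := by
  rw [toWord_mul, toWord_of]
  refine IsReduced.reduce_eq (List.IsChain.append isReduced_toWord (.singleton _) ?_)
  rintro ⟨j, b⟩ hjb _ ⟨⟩ rfl
  cases b
  · exact absurd hjb h
  · rfl

theorem toWord_of_mul (h : x.toWord.head? ≠ some (i, false)) :
    (of i * x).toWord = (i, true) :: x.toWord := by
  rw [toWord_mul, toWord_of]
  refine IsReduced.reduce_eq (List.IsChain.cons isReduced_toWord ?_)
  rintro ⟨j, b⟩ hjb rfl
  cases b
  · exact absurd hjb h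
  · rfl

theorem norm_mul_of_lt (h : x.toWord.getLast? = some (i, false)) : norm (x * of i) < norm x := by
  obtain ⟨w, hw⟩ := List.getLast?_eq_some_iff.mp h
  have hx : x * of i = mk w := by
    rw [← mk_toWord (x := x), hw, ← mul_mk, ← inv_of_eq_mk, inv_mul_cancel_right]
  calc norm (x * of i) ≤ w.length := hx ▸ norm_mk_le
    _ < norm x := by simp [norm, hw]

theorem norm_of_mul_lt (h : x.toWord.head? = some (i, false)) : norm (of i * x) < norm x := by
  obtain ⟨w, hw⟩ := List.head?_eq_some_iff.mp h
  have hx : of i * x = mk w := by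
    rw [← mk_toWord (x := x), hw, ← List.singleton_append, ← mul_mk, ← inv_of_eq_mk,
      mul_inv_cancel_left]
  calc norm (of i * x) ≤ w.length := hx ▸ norm_mk_le
    _ < norm x := by simp [norm, hw]

theorem exists_zpow_eq_of_commute_of (h : Commute x (of i)) : ∃ k : ℤ, of i ^ k = x := by
  induction hn : x.norm using Nat.strong_induction_on generalizing x with
  | _ n ih =>
    by_cases hshort : norm (x * of i) < n
    · obtain ⟨k, hk⟩ := ih _ hshort (h.mul_left (Commute.refl _)) rfl
      exact ⟨k - 1, by rw [zpow_sub_one, hk, mul_inv_cancel_right]⟩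
    · have hlast : x.toWord.getLast? ≠ some (i, false) := fun hx =>
        hshort (hn ▸ norm_mul_of_lt hx)
      have hhead : x.toWord.head? ≠ some (i, false) := fun hx =>
        hshort (hn ▸ h.eq ▸ norm_of_mul_lt hx)
      have hword : x.toWord ++ [(i, true)] = (i, true) :: x.toWord := by
        rw [← toWord_mul_of hlast, ← toWord_of_mul hhead, h.eq]
      refine ⟨x.toWord.length, toWord_injective ?_⟩
      rw [zpow_natCast, toWord_of_pow, ← List.eq_replicate_of_append_singleton_eq_cons hword]

end DecidableEq

theorem centralizer_of (i : α) : Subgroup.centralizer {of i} = Subgroup.zpowers (of i) := by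
  classical
  refine le_antisymm (fun x hx => ?_) (Subgroup.zpowers_le.mpr ?_)
  · exact exists_zpow_eq_of_commute_of (Subgroup.mem_centralizer_singleton_iff.mp hx)
  · exact Subgroup.mem_centralizer_singleton_iff.mpr rfl

end FreeGroup

theorem stmt_1 {α : Type*} (i : α) :
    Subgroup.centralizer {FreeGroup.of i} = Subgroup.zpowers (FreeGroup.of i) ∧
    ∀ x : FreeGroup α,
      x * FreeGroup.of i = FreeGroup.of i * x ↔ ∃ k : ℤ, x = (FreeGroup.of i) ^ k := by
  refine ⟨FreeGroup.centralizer_of i, fun x => ?_⟩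
  rw [← Subgroup.mem_centralizer_singleton_iff, FreeGroup.centralizer_of,
    Subgroup.mem_zpowers_iff]
  simp only [eq_comm]
end

section
/- Let φ = (1+√5)/2 be the golden ratio and set λ = φ + √φ. Then λ is a root of x⁴ − 2x³ − 2x² − 2x + 1, λ is a real number satisfying 2.89 < λ < 2.8901, and λ is the largest real root of this polynomial. -/
/-!
Since `φ² = φ + 1`, the quartic factors as `(x² - 2φx + 1)(x² - 2(1 - φ)x + 1)`. The second
factor has no real roots because `(1 - φ)² < 1`, and the roots of the first are `φ ± √φ`, since
`φ² - 1 = φ`. Hence `φ + √φ` is the largest real root; the numerical bounds follow from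
`2.2360679 < √5 < 2.236068`.
-/

open Real

theorem sq_sub_two_mul_add_one_pos {c : ℝ} (hc : c ^ 2 < 1) (x : ℝ) :
    0 < x ^ 2 - 2 * c * x + 1 := by
  nlinarith [sq_nonneg (x - c)]

theorem le_add_sqrt_of_sub_sq_eq {a b x : ℝ} (h : (x - a) ^ 2 = b) : x ≤ a + √b := by
  linarith [le_abs_self (x - a), abs_le_sqrt h.le]

section

open goldenRatio

theorem quartic_eq_mul_goldenRatio (x : ℝ) :
    x ^ 4 - 2 * x ^ 3 - 2 * x ^ 2 - 2 * x + 1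
      = (x ^ 2 - 2 * φ * x + 1) * (x ^ 2 - 2 * (1 - φ) * x + 1) := by
  linear_combination 4 * x ^ 2 * goldenRatio_sq

theorem goldenRatio_add_sqrt_sq_sub : (φ + √φ) ^ 2 - 2 * φ * (φ + √φ) + 1 = 0 := by
  linear_combination sq_sqrt goldenRatio_pos.le - goldenRatio_sq

theorem le_goldenRatio_add_sqrt_of_quartic_eq_zero {x : ℝ}
    (hx : x ^ 4 - 2 * x ^ 3 - 2 * x ^ 2 - 2 * x + 1 = 0) : x ≤ φ + √φ := by
  have hconj : 0 < x ^ 2 - 2 * (1 - φ) * x + 1 :=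
    sq_sub_two_mul_add_one_pos (by nlinarith [one_lt_goldenRatio, goldenRatio_lt_two]) x
  have hroot : x ^ 2 - 2 * φ * x + 1 = 0 := by
    rw [quartic_eq_mul_goldenRatio] at hx
    exact (mul_eq_zero.mp hx).resolve_right hconj.ne'
  exact le_add_sqrt_of_sub_sq_eq (by linear_combination hroot + goldenRatio_sq)

theorem goldenRatio_mem_Ioo : φ ∈ Set.Ioo 1.6180339 1.618034 := by
  have h5lo : (2.2360679 : ℝ) < √5 := lt_sqrt_of_sq_lt (by norm_num)
  have h5hi : √5 < 2.236068 := (sqrt_lt' (by norm_num)).mpr (by norm_num)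
  unfold goldenRatio
  constructor <;> linarith

theorem sqrt_goldenRatio_mem_Ioo : √φ ∈ Set.Ioo 1.272 1.27202 := by
  obtain ⟨hlo, hhi⟩ := goldenRatio_mem_Ioo
  exact ⟨lt_sqrt_of_sq_lt (by linarith), (sqrt_lt' (by norm_num)).mpr (by linarith)⟩

end

theorem stmt_11 (φ lam : ℝ) (hφ : φ = (1 + Real.sqrt 5) / 2)
    (hlam : lam = φ + Real.sqrt φ) :
    lam ^ 4 - 2 * lam ^ 3 - 2 * lam ^ 2 - 2 * lam + 1 = 0 ∧
    2.89 < lam ∧ lam < 2.8901 ∧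
    ∀ x : ℝ, x ^ 4 - 2 * x ^ 3 - 2 * x ^ 2 - 2 * x + 1 = 0 → x ≤ lam := by
  change φ = goldenRatio at hφ
  subst hφ hlam
  obtain ⟨hφlo, hφhi⟩ := goldenRatio_mem_Ioo
  obtain ⟨hslo, hshi⟩ := sqrt_goldenRatio_mem_Ioo
  refine ⟨?_, by linarith, by linarith, fun x hx => le_goldenRatio_add_sqrt_of_quartic_eq_zero hx⟩
  rw [quartic_eq_mul_goldenRatio, goldenRatio_add_sqrt_sq_sub, zero_mul]
end
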